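/- A finitely generated subgroup H of PSL_2(Z) is almost malnormal if and only if there do not exist two distinct vertices p, q in its Stallings graph and an infinite-order element g of PSL_2(Z) whose normal form labels cycles at both p and q. -/

import Mathlib

/-- Relators of the presentation `⟨a, b ∣ a² = b³ = 1⟩`. -/
def pslRels : Set (FreeGroup Bool) := {FreeGroup.of true ^ 2, FreeGroup.of false ^ 3}

/-- The modular group `PSL₂(ℤ) = ⟨a, b ∣ a² = b³ = 1⟩ = ℤ/2 * ℤ/3`. -/
abbrev PSL2Z : Type := PresentedGroup pslRels

/-- The order-2 generator `a`. -/
def gen_a : PSL2Z := PresentedGroup.of true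

/-- The order-3 generator `b`. -/
def gen_b : PSL2Z := PresentedGroup.of false

/-- The alphabet `{a, b, b⁻¹}`. -/
inductive Letter : Type
  | A | B | Binv
deriving DecidableEq

/-- Interpretation of a letter in `PSL₂(ℤ)`. -/
def Letter.toG : Letter → PSL2Z
  | .A => gen_a
  | .B => gen_b
  | .Binv => gen_b⁻¹

/-- Evaluation of a word over `{a, b, b⁻¹}` in `PSL₂(ℤ)`. -/
def evalWord (w : List Letter) : PSL2Z := (w.map Letter.toG).prod

/-- Two adjacent letters alternate between `a` and `{b, b⁻¹}`. -/
def AltPair (x y : Letter) : Prop := (x = .A ∧ y ≠ .A) ∨ (x ≠ .A ∧ y = .A)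

/-- A word is in normal form (freely reduced, no factor `a²`, `b²`, `b⁻²`):
it has length ≤ 1 or alternates `a` with letters in `{b, b⁻¹}`. -/
def NormalWord (w : List Letter) : Prop := w.Chain' AltPair

/-- `w` is a geodesic representative of `g`. -/
def Geodesic (w : List Letter) (g : PSL2Z) : Prop :=
  evalWord w = g ∧ ∀ w' : List Letter, evalWord w' = g → w.length ≤ w'.length

/-- A cyclically reduced word: a normal form of length 1, or starting with `a`
and ending in `{b, b⁻¹}`, or starting in `{b, b⁻¹}` and ending with `a`. -/
def CyclicallyReducedWord (w : List Letter) : Prop :=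
  NormalWord w ∧ (w.length = 1 ∨
    ∃ x y, w.head? = some x ∧ w.getLast? = some y ∧
      ((x = .A ∧ y ≠ .A) ∨ (x ≠ .A ∧ y = .A)))

/-- The right-coset equivalence: `x ≈ y` iff `x y⁻¹ ∈ H` (so `Hx = Hy`). -/
def cosetSetoid (H : Subgroup PSL2Z) : Setoid PSL2Z where
  r x y := x * y⁻¹ ∈ H
  iseqv := by
    refine ⟨fun x => by simpa using H.one_mem, fun {x y} h => ?_, fun {x y z} hxy hyz => ?_⟩
    · simpa [mul_inv_rev] using H.inv_mem h
    · simpa [mul_assoc] using H.mul_mem hxy hyz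

/-- The vertex set of the Schreier graph of `H`: right cosets of `H`. -/
def Coset (H : Subgroup PSL2Z) : Type := Quotient (cosetSetoid H)

/-- The base vertex `H·1` of the Schreier graph. -/
def base (H : Subgroup PSL2Z) : Coset H := Quotient.mk (cosetSetoid H) 1

/-- Reading a letter from a vertex of the Schreier graph: `Hg ↦ Hgℓ`. -/
def step {H : Subgroup PSL2Z} (v : Coset H) (ℓ : Letter) : Coset H :=
  Quotient.map (fun g => g * ℓ.toG)
    (fun x y hxy => by
      change x * y⁻¹ ∈ H at hxy
      change x * ℓ.toG * (y * ℓ.toG)⁻¹ ∈ H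
      simpa [mul_inv_rev, mul_assoc] using hxy) v

/-- Reading a word from a vertex of the Schreier graph. -/
def readW {H : Subgroup PSL2Z} (v : Coset H) (w : List Letter) : Coset H :=
  w.foldl step v

/-- Some geodesic (normal-form) cycle at the base vertex reads letter `m`
from the vertex `u`. -/
def edgeOkAux (H : Subgroup PSL2Z) (u : Coset H) (m : Letter) : Prop :=
  ∃ w p q : List Letter, NormalWord w ∧ evalWord w ∈ H ∧
    w = p ++ m :: q ∧ readW (base H) p = u

/-- Traversing letter `ℓ` from `v` uses an edge of the Stallings graph `Γ(H)`
(the subgraph of the Schreier graph spanned by the geodesic cycles at the base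
vertex); `a`-edges and `b`-edges may be traversed in either direction. -/
def edgeOk (H : Subgroup PSL2Z) (v : Coset H) : Letter → Prop
  | .A => edgeOkAux H v .A ∨ edgeOkAux H (step v .A) .A
  | .B => edgeOkAux H v .B ∨ edgeOkAux H (step v .B) .Binv
  | .Binv => edgeOkAux H v .Binv ∨ edgeOkAux H (step v .Binv) .B

/-- `w` labels a path in the Stallings graph `Γ(H)` starting at `v`. -/
def labelsPathFrom (H : Subgroup PSL2Z) : Coset H → List Letter → Prop
  | _, [] => True
  | v, ℓ :: w => edgeOk H v ℓ ∧ labelsPathFrom H (step v ℓ) w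

/-- `w` labels a cycle at `v` in the Stallings graph `Γ(H)`. -/
def labelsCycleAt (H : Subgroup PSL2Z) (v : Coset H) (w : List Letter) : Prop :=
  labelsPathFrom H v w ∧ readW v w = v

/-- `v` is a vertex of the Stallings graph `Γ(H)`. -/
def StallingsVertex (H : Subgroup PSL2Z) (v : Coset H) : Prop :=
  ∃ w p q : List Letter, NormalWord w ∧ evalWord w ∈ H ∧ w = p ++ q ∧
    readW (base H) p = v

/-- `H` is almost malnormal: `H ∩ H^x` is finite for every `x ∉ H`. -/
def AlmostMalnormal (H : Subgroup PSL2Z) : Prop :=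
  ∀ x : PSL2Z, x ∉ H → {g : PSL2Z | g ∈ H ∧ x * g * x⁻¹ ∈ H}.Finite

/-!
Normal forms in `PSL₂(ℤ) = ℤ/2 * ℤ/3` are the words alternating between `a` and `b^{±1}`; they
are unique because the group acts on such words by left multiplication (van der Waerden's trick).
An element of infinite order is conjugate, `g = E c E⁻¹`, to a cyclically reduced word `c`, and `c`
labels a cycle of `Γ(H)` at every vertex `Hz` with `z c z⁻¹ ∈ H`: by bounded cancellation, the
normal form of a high power `z c^k z⁻¹ ∈ H` contains a copy of `c` read from `Hz`.

If `x ∉ H` and `H ∩ x⁻¹Hx` is infinite, it contains an element `E c E⁻¹` of infinite order, since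
torsion subgroups of `ℤ/2 * ℤ/3` are finite (two elliptic elements with different fixed points have
a hyperbolic product); then `c` labels cycles at the distinct vertices `HE` and `HxE`. Conversely,
if `w` of infinite order labels cycles at `Hy₁ ≠ Hy₂`, then all powers of `y₂ w y₂⁻¹` lie in
`H ∩ x⁻¹Hx` for `x = y₁ y₂⁻¹ ∉ H`.
-/

open Subgroup

theorem isOfFinOrder_conj_iff {G : Type*} [Group G] (E x : G) :
    IsOfFinOrder (E * x * E⁻¹) ↔ IsOfFinOrder x :=
  ⟨(isConj_iff.2 ⟨E⁻¹, by group⟩).isOfFinOrder, (isConj_iff.2 ⟨E, rfl⟩).isOfFinOrder⟩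

theorem gen_a_mul_self : gen_a * gen_a = 1 := by
  have := PresentedGroup.one_of_mem (rels := pslRels) (Or.inl rfl)
  rwa [map_pow, pow_two] at this

theorem gen_b_pow_three : gen_b ^ 3 = 1 := by
  have := PresentedGroup.one_of_mem (rels := pslRels) (Or.inr rfl)
  rwa [map_pow] at this

theorem gen_a_inv : gen_a⁻¹ = gen_a :=
  inv_eq_of_mul_eq_one_right gen_a_mul_self

theorem gen_b_mul_self : gen_b * gen_b = gen_b⁻¹ :=
  eq_inv_of_mul_eq_one_left (by rw [← pow_two, ← pow_succ, gen_b_pow_three])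

theorem gen_b_inv_mul_self : gen_b⁻¹ * gen_b⁻¹ = gen_b := by
  rw [← mul_inv_rev, gen_b_mul_self, inv_inv]

@[simp] theorem evalWord_nil : evalWord [] = 1 := rfl

@[simp] theorem evalWord_cons (ℓ : Letter) (w : List Letter) :
    evalWord (ℓ :: w) = ℓ.toG * evalWord w := by
  simp [evalWord]

@[simp] theorem evalWord_append (u v : List Letter) :
    evalWord (u ++ v) = evalWord u * evalWord v := by
  simp [evalWord]

namespace Letter

def isA : Letter → Bool
  | A => true
  | _ => false

def inv : Letter → Letter
  | A => A
  | B => Binv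
  | Binv => B

@[simp] theorem isA_inv (ℓ : Letter) : ℓ.inv.isA = ℓ.isA := by cases ℓ <;> rfl

@[simp] theorem toG_inv (ℓ : Letter) : ℓ.inv.toG = ℓ.toG⁻¹ := by
  cases ℓ
  · exact gen_a_inv.symm
  · rfl
  · exact (inv_inv gen_b).symm

theorem isOfFinOrder_toG (ℓ : Letter) : IsOfFinOrder ℓ.toG := by
  have hb : IsOfFinOrder gen_b := isOfFinOrder_iff_pow_eq_one.2 ⟨3, by norm_num, gen_b_pow_three⟩
  cases ℓ
  · exact isOfFinOrder_iff_pow_eq_one.2 ⟨2, by norm_num, by rw [pow_two]; exact gen_a_mul_self⟩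
  · exact hb
  · exact hb.inv

theorem zpowers_toG_eq {x y : Letter} (h : x.isA = y.isA) : zpowers x.toG = zpowers y.toG := by
  cases x <;> cases y <;> simp [isA, toG, zpowers_inv] at h ⊢

theorem toG_mem_zpowers {x y : Letter} (h : x.isA = y.isA) : x.toG ∈ zpowers y.toG :=
  zpowers_toG_eq h ▸ mem_zpowers x.toG

theorem exists_evalWord_eq_mul {x y : Letter} (h : x.isA = y.isA) :
    ∃ M : List Letter, M.length ≤ 1 ∧ (∀ m ∈ M, m.isA = x.isA) ∧
      evalWord M = x.toG * y.toG := by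
  cases x <;> cases y <;> simp only [isA, Bool.true_eq_false, Bool.false_eq_true] at h
  · exact ⟨[], by simp, by simp, gen_a_mul_self.symm⟩
  · exact ⟨[Binv], by simp, by simp [isA], by simp [toG, gen_b_mul_self]⟩
  · exact ⟨[], by simp, by simp, by simp [toG]⟩
  · exact ⟨[], by simp, by simp, by simp [toG]⟩
  · exact ⟨[B], by simp, by simp [isA], by simp [toG, gen_b_inv_mul_self]⟩

end Letter

theorem altPair_iff {x y : Letter} : AltPair x y ↔ x.isA ≠ y.isA := by
  cases x <;> cases y <;> simp [AltPair, Letter.isA]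

theorem normalWord_cons {ℓ : Letter} {t : List Letter} :
    NormalWord (ℓ :: t) ↔ (∀ y ∈ t.head?, AltPair ℓ y) ∧ NormalWord t :=
  List.isChain_cons

theorem normalWord_append {u v : List Letter} :
    NormalWord (u ++ v) ↔
      NormalWord u ∧ NormalWord v ∧ ∀ x ∈ u.getLast?, ∀ y ∈ v.head?, AltPair x y :=
  List.isChain_append

theorem normalWord_of_length_le_one {w : List Letter} (h : w.length ≤ 1) : NormalWord w := by
  match w, h with
  | [], _ => exact List.isChain_nil
  | [_], _ => exact List.isChain_singleton _

theorem altPair_congr {x x' y y' : Letter} (hx : x.isA = x'.isA) (hy : y.isA = y'.isA) :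
    AltPair x y ↔ AltPair x' y' := by
  simp only [altPair_iff, hx, hy]

def consA : List Letter → List Letter
  | .A :: t => t
  | w => .A :: w

def consB : List Letter → List Letter
  | .B :: t => .Binv :: t
  | .Binv :: t => t
  | w => .B :: w

theorem normalWord_consA {w : List Letter} (h : NormalWord w) : NormalWord (consA w) := by
  rcases w with _ | ⟨_ | _ | _, t⟩
  · exact List.isChain_singleton _
  · exact (normalWord_cons.1 h).2
  all_goals exact normalWord_cons.2 ⟨by simp [AltPair], h⟩

theorem normalWord_consB {w : List Letter} (h : NormalWord w) : NormalWord (consB w) := by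
  rcases w with _ | ⟨_ | _ | _, t⟩
  · exact List.isChain_singleton _
  · exact normalWord_cons.2 ⟨by simp [AltPair], h⟩
  · exact normalWord_cons.2
      ⟨fun y hy => (altPair_congr (x := .B) (x' := .Binv) rfl rfl).1 ((normalWord_cons.1 h).1 y hy),
        (normalWord_cons.1 h).2⟩
  · exact (normalWord_cons.1 h).2

theorem consA_consA {w : List Letter} (h : NormalWord w) : consA (consA w) = w := by
  rcases w with _ | ⟨_ | _ | _, _ | ⟨_ | _ | _, _⟩⟩ <;>
    first | rfl | simp [normalWord_cons, AltPair] at h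

theorem consB_consB_consB {w : List Letter} (h : NormalWord w) : consB (consB (consB w)) = w := by
  rcases w with _ | ⟨_ | _ | _, _ | ⟨_ | _ | _, _⟩⟩ <;>
    first | rfl | simp [normalWord_cons, AltPair] at h

theorem evalWord_consA (w : List Letter) : evalWord (consA w) = gen_a * evalWord w := by
  rcases w with _ | ⟨_ | _ | _, t⟩ <;>
    simp [consA, Letter.toG, ← mul_assoc, gen_a_mul_self]

theorem evalWord_consB (w : List Letter) : evalWord (consB w) = gen_b * evalWord w := by
  rcases w with _ | ⟨_ | _ | _, t⟩ <;>
    simp [consB, Letter.toG, ← mul_assoc, gen_b_mul_self]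

def consAPerm : Equiv.Perm {w // NormalWord w} where
  toFun w := ⟨consA w.1, normalWord_consA w.2⟩
  invFun w := ⟨consA w.1, normalWord_consA w.2⟩
  left_inv w := Subtype.ext (consA_consA w.2)
  right_inv w := Subtype.ext (consA_consA w.2)

def consBPerm : Equiv.Perm {w // NormalWord w} where
  toFun w := ⟨consB w.1, normalWord_consB w.2⟩
  invFun w := ⟨consB (consB w.1), normalWord_consB (normalWord_consB w.2)⟩
  left_inv w := Subtype.ext (consB_consB_consB w.2)
  right_inv w := Subtype.ext (consB_consB_consB w.2)

def normalFormAction : PSL2Z →* Equiv.Perm {w // NormalWord w} :=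
  PresentedGroup.toGroup (f := fun b => cond b consAPerm consBPerm) <| by
    rintro r (rfl | rfl) <;> ext w : 2 <;>
      simp [consAPerm, consBPerm, pow_succ, consA_consA w.2, consB_consB_consB w.2]

theorem normalFormAction_gen_a : normalFormAction gen_a = consAPerm :=
  PresentedGroup.toGroup.of _

theorem normalFormAction_gen_b : normalFormAction gen_b = consBPerm :=
  PresentedGroup.toGroup.of _

theorem evalWord_normalFormAction (g : PSL2Z) (w : {w // NormalWord w}) :
    evalWord (normalFormAction g w).1 = g * evalWord w.1 := by
  let K : Subgroup PSL2Z :=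
    { carrier := {g | ∀ w, evalWord (normalFormAction g w).1 = g * evalWord w.1}
      one_mem' := by simp
      mul_mem' := fun hx hy w => by simp [hx _, hy _, mul_assoc]
      inv_mem' := fun {x} hx w => by
        rw [eq_inv_mul_iff_mul_eq, ← hx, ← Equiv.Perm.mul_apply, ← map_mul, mul_inv_cancel,
          map_one, Equiv.Perm.one_apply] }
  refine PresentedGroup.generated_by pslRels K (fun b w => ?_) g w
  cases b
  · change evalWord (normalFormAction gen_b w).1 = gen_b * _
    rw [normalFormAction_gen_b]
    exact evalWord_consB w.1
  · change evalWord (normalFormAction gen_a w).1 = gen_a * _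
    rw [normalFormAction_gen_a]
    exact evalWord_consA w.1

theorem normalFormAction_toG_of_normalWord_cons {ℓ : Letter} {t : List Letter}
    (h : NormalWord (ℓ :: t)) :
    normalFormAction ℓ.toG ⟨t, (normalWord_cons.1 h).2⟩ = ⟨ℓ :: t, h⟩ := by
  apply Subtype.ext
  cases ℓ
  · rw [Letter.toG, normalFormAction_gen_a]
    rcases t with _ | ⟨_ | _ | _, _⟩ <;> first | rfl | simp [normalWord_cons, AltPair] at h
  · rw [Letter.toG, normalFormAction_gen_b]
    rcases t with _ | ⟨_ | _ | _, _⟩ <;> first | rfl | simp [normalWord_cons, AltPair] at h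
  · rw [Letter.toG, map_inv, normalFormAction_gen_b]
    rcases t with _ | ⟨_ | _ | _, _⟩ <;> first | rfl | simp [normalWord_cons, AltPair] at h

def normalForm (g : PSL2Z) : List Letter := (normalFormAction g ⟨[], List.isChain_nil⟩).1

theorem normalWord_normalForm (g : PSL2Z) : NormalWord (normalForm g) :=
  (normalFormAction g _).2

@[simp] theorem evalWord_normalForm (g : PSL2Z) : evalWord (normalForm g) = g :=
  (evalWord_normalFormAction g _).trans (mul_one g)

theorem normalForm_evalWord {w : List Letter} (h : NormalWord w) : normalForm (evalWord w) = w := by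
  induction w with
  | nil => simp [normalForm]
  | cons ℓ t ih =>
    have ht := (normalWord_cons.1 h).2
    have : normalFormAction (evalWord t) ⟨[], List.isChain_nil⟩ = ⟨t, ht⟩ :=
      Subtype.ext (ih ht)
    rw [normalForm, evalWord_cons, map_mul, Equiv.Perm.mul_apply, this,
      normalFormAction_toG_of_normalWord_cons h]

/-- Bounded cancellation: only a suffix `d₂` of `d` and an equally long prefix `t₁` of `t`
interact, leaving at most one letter `M`. -/
theorem exists_normalForm_evalWord_mul {d t : List Letter} (hd : NormalWord d)
    (ht : NormalWord t) :
    ∃ d₁ d₂ t₁ t₂ M : List Letter, d = d₁ ++ d₂ ∧ t = t₁ ++ t₂ ∧ d₂.length = t₁.length ∧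
      M.length ≤ 1 ∧ normalForm (evalWord d * evalWord t) = d₁ ++ M ++ t₂ := by
  induction d using List.reverseRecOn generalizing t with
  | nil => exact ⟨[], [], [], t, [], rfl, rfl, rfl, by simp, by simp [normalForm_evalWord ht]⟩
  | append_singleton d ℓ ih =>
    obtain ⟨hd', -, hdℓ⟩ := normalWord_append.1 hd
    by_cases hclean : ∀ y ∈ t.head?, AltPair ℓ y
    · refine ⟨d ++ [ℓ], [], [], t, [], by simp, rfl, rfl, by simp, ?_⟩
      rw [← evalWord_append, normalForm_evalWord (normalWord_append.2 ⟨hd, ht, by simpa⟩)]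
      simp
    push Not at hclean
    obtain ⟨y, hy, hℓy⟩ := hclean
    obtain ⟨t', rfl⟩ : ∃ t', t = y :: t' := ⟨t.tail, List.eq_cons_of_mem_head? hy⟩
    obtain ⟨hyt', ht'⟩ := normalWord_cons.1 ht
    have hℓy' : ℓ.isA = y.isA := by simpa [altPair_iff] using hℓy
    obtain ⟨M, hM, hMisA, hMeval⟩ := Letter.exists_evalWord_eq_mul hℓy'
    have heval : evalWord (d ++ [ℓ]) * evalWord (y :: t') = evalWord d * evalWord (M ++ t') := by
      simp [hMeval, mul_assoc]
    rcases M with _ | ⟨m, _ | _⟩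
    · obtain ⟨d₁, d₂, t₁, t₂, M', rfl, rfl, hlen, hM', hnf⟩ := ih hd' ht'
      exact ⟨d₁, d₂ ++ [ℓ], y :: t₁, t₂, M', by simp, rfl, by simp [hlen], hM',
        by rw [heval, List.nil_append, hnf]⟩
    · have hm : m.isA = ℓ.isA := hMisA m (by simp)
      have hdmt : NormalWord (d ++ m :: t') := by
        refine normalWord_append.2
          ⟨hd', normalWord_cons.2 ⟨fun z hz => ?_, ht'⟩, fun x hx z hz => ?_⟩
        · exact (altPair_congr (hm.trans hℓy') rfl).2 (hyt' z hz)
        · obtain rfl : z = m := by simpa using hz.symm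
          exact (altPair_congr rfl hm).2 (hdℓ x hx ℓ rfl)
      refine ⟨d, [ℓ], [y], t', [m], rfl, rfl, rfl, by simp, ?_⟩
      rw [heval, ← evalWord_append, List.singleton_append, normalForm_evalWord hdmt]
      simp
    · simp at hM

@[simp] theorem normalForm_one : normalForm 1 = [] :=
  normalForm_evalWord (w := []) List.isChain_nil

def wordPow (c : List Letter) : ℕ → List Letter
  | 0 => []
  | k + 1 => c ++ wordPow c k

@[simp] theorem evalWord_wordPow (c : List Letter) (k : ℕ) :
    evalWord (wordPow c k) = evalWord c ^ k := by
  induction k with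
  | zero => simp [wordPow]
  | succ k ih => rw [wordPow, evalWord_append, ih, pow_succ']

@[simp] theorem length_wordPow (c : List Letter) (k : ℕ) :
    (wordPow c k).length = k * c.length := by
  induction k with
  | zero => simp [wordPow]
  | succ k ih => simp [wordPow, ih, Nat.succ_mul, Nat.add_comm]

theorem exists_drop_wordPow_append {c : List Letter} (hc : c ≠ []) (t : List Letter) :
    ∀ {j k : ℕ}, j + 2 ≤ k → ∃ s n, (wordPow c k ++ t).drop j = s ++ c ++ (wordPow c n ++ t)
  | _, 0, h => by omega
  | j, k + 1, h => by
    rw [wordPow, List.append_assoc, List.drop_append]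
    by_cases hj : j < c.length
    · obtain ⟨k', rfl⟩ : ∃ k', k = k' + 1 := ⟨k - 1, by omega⟩
      exact ⟨c.drop j, k', by rw [Nat.sub_eq_zero_of_le hj.le, List.drop_zero, wordPow]; simp⟩
    · have hc' : 0 < c.length := List.length_pos_iff.2 hc
      obtain ⟨s, n, hs⟩ := exists_drop_wordPow_append hc t (j := j - c.length) (k := k) (by omega)
      exact ⟨s, n, by rw [List.drop_eq_nil_of_le (by omega), List.nil_append, hs]⟩

/-- `c` is cyclically reduced of length at least two (a single letter `ℓ` fails, as `ℓℓ` is not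
normal). -/
def IsCyclicallyReduced (c : List Letter) : Prop := c ≠ [] ∧ NormalWord (c ++ c)

namespace IsCyclicallyReduced

variable {c : List Letter} (hc : IsCyclicallyReduced c)
include hc

theorem normalWord : NormalWord c := (normalWord_append.1 hc.2).1

theorem altPair_getLast_head : ∀ x ∈ c.getLast?, ∀ y ∈ c.head?, AltPair x y :=
  (normalWord_append.1 hc.2).2.2

theorem two_le_length : 2 ≤ c.length := by
  match c, hc with
  | [ℓ], hc => simpa [AltPair] using hc.altPair_getLast_head ℓ rfl ℓ rfl
  | _ :: _ :: _, _ => simp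

theorem normalWord_wordPow_append {t : List Letter} (ht : NormalWord (c ++ t)) (k : ℕ) :
    NormalWord (wordPow c k ++ t) := by
  induction k with
  | zero => exact (normalWord_append.1 ht).2.1
  | succ k ih =>
    rw [wordPow, List.append_assoc]
    refine normalWord_append.2 ⟨hc.normalWord, ih, ?_⟩
    cases k with
    | zero => exact (normalWord_append.1 ht).2.2
    | succ k =>
      rw [wordPow, List.append_assoc, List.head?_append_of_ne_nil _ hc.1]
      exact hc.altPair_getLast_head

theorem not_isOfFinOrder : ¬IsOfFinOrder (evalWord c) := by
  intro h
  obtain ⟨n, hn, hpow⟩ := isOfFinOrder_iff_pow_eq_one.1 h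
  have hnorm := hc.normalWord_wordPow_append (t := []) (by simpa using hc.normalWord) n
  rw [List.append_nil] at hnorm
  have := congrArg List.length (normalForm_evalWord hnorm)
  rw [evalWord_wordPow, hpow, normalForm_one, List.length_nil, length_wordPow] at this
  nlinarith [hc.two_le_length]

theorem exists_normalWord_append_evalWord_eq (g : PSL2Z) :
    ∃ m t, NormalWord (c ++ t) ∧ evalWord t = evalWord c ^ m * g := by
  induction hn : (normalForm g).length using Nat.strong_induction_on generalizing g with
  | _ n ih =>
  obtain ⟨c₁, c₂, t₁, t₂, M, hc12, ht12, hlen, hM, hnf⟩ :=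
    exists_normalForm_evalWord_mul hc.normalWord (normalWord_normalForm g)
  rw [evalWord_normalForm] at hnf
  rcases c₁ with _ | ⟨z, c₁⟩
  · have hshort : (normalForm (evalWord c * g)).length < n := by
      have := hc.two_le_length
      rw [hc12] at this
      rw [hnf, ← hn, ht12]
      simp only [List.nil_append, List.length_append] at this ⊢
      omega
    obtain ⟨m, t, ht, hteval⟩ := ih _ hshort (evalWord c * g) rfl
    exact ⟨m + 1, t, ht, by rw [hteval, pow_succ, mul_assoc]⟩
  · refine ⟨1, normalForm (evalWord c * g), normalWord_append.2
      ⟨hc.normalWord, normalWord_normalForm _, fun x hx y hy => hc.altPair_getLast_head x hx y ?_⟩,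
      by simp⟩
    rw [hnf] at hy
    rw [hc12]
    simpa using hy

end IsCyclicallyReduced

/-- Conjugating by the first letter merges it with the last one when they lie in the same
factor. -/
theorem length_normalForm_conj_lt {ℓ₀ ℓ₁ : Letter} {mid : List Letter}
    (hw : NormalWord (ℓ₀ :: (mid ++ [ℓ₁]))) (hisA : ℓ₁.isA = ℓ₀.isA) :
    (normalForm (ℓ₀.toG⁻¹ * evalWord (ℓ₀ :: (mid ++ [ℓ₁])) * ℓ₀.toG)).length <
      (ℓ₀ :: (mid ++ [ℓ₁])).length := by
  obtain ⟨hmid, -, hmidℓ₁⟩ := normalWord_append.1 (normalWord_cons.1 hw).2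
  obtain ⟨M, hM, hMisA, hMeval⟩ := Letter.exists_evalWord_eq_mul hisA
  have hmidM : NormalWord (mid ++ M) := by
    refine normalWord_append.2 ⟨hmid, normalWord_of_length_le_one hM, fun x hx m hm => ?_⟩
    exact (altPair_congr rfl (hMisA m (List.mem_of_mem_head? hm))).2 (hmidℓ₁ x hx ℓ₁ rfl)
  have hconj : ℓ₀.toG⁻¹ * evalWord (ℓ₀ :: (mid ++ [ℓ₁])) * ℓ₀.toG = evalWord (mid ++ M) := by
    simp [hMeval, mul_assoc]
  rw [hconj, normalForm_evalWord hmidM]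
  simp only [List.length_append, List.length_cons] at hM ⊢
  omega

theorem exists_conj_eq_evalWord (g : PSL2Z) :
    ∃ E c, g = E * evalWord c * E⁻¹ ∧ (c.length ≤ 1 ∨ IsCyclicallyReduced c) := by
  induction hn : (normalForm g).length using Nat.strong_induction_on generalizing g with
  | _ n ih =>
  have hw := normalWord_normalForm g
  by_cases hlen : (normalForm g).length ≤ 1
  · exact ⟨1, normalForm g, by rw [evalWord_normalForm]; group, Or.inl hlen⟩
  obtain ⟨ℓ₀, mid, ℓ₁, hg⟩ : ∃ ℓ₀ mid ℓ₁, normalForm g = ℓ₀ :: (mid ++ [ℓ₁]) := by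
    match normalForm g, hlen with
    | ℓ₀ :: r, hlen =>
      rcases List.eq_nil_or_concat r with rfl | ⟨mid, ℓ₁, rfl⟩
      · simp at hlen
      · exact ⟨ℓ₀, mid, ℓ₁, by simp⟩
  rw [hg] at hw hn
  by_cases hcyc : AltPair ℓ₁ ℓ₀
  · refine ⟨1, normalForm g, by rw [evalWord_normalForm]; group, Or.inr ?_⟩
    rw [hg]
    refine ⟨List.cons_ne_nil _ _, normalWord_append.2 ⟨hw, hw, fun x hx y hy => ?_⟩⟩
    obtain rfl : x = ℓ₁ := by
      rw [← List.cons_append, List.getLast?_concat] at hx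
      simpa using hx.symm
    obtain rfl : y = ℓ₀ := by simpa using hy.symm
    exact hcyc
  have hshort : (normalForm (ℓ₀.toG⁻¹ * g * ℓ₀.toG)).length < n := by
    rw [← hn, ← evalWord_normalForm g, hg]
    exact length_normalForm_conj_lt hw (by simpa [altPair_iff] using hcyc)
  obtain ⟨E, c, hE, hc⟩ := ih _ hshort _ rfl
  refine ⟨ℓ₀.toG * E, c, ?_, hc⟩
  calc g = ℓ₀.toG * (ℓ₀.toG⁻¹ * g * ℓ₀.toG) * ℓ₀.toG⁻¹ := by group
    _ = ℓ₀.toG * E * evalWord c * (ℓ₀.toG * E)⁻¹ := by rw [hE]; group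

theorem exists_conj_isCyclicallyReduced {g : PSL2Z} (hg : ¬IsOfFinOrder g) :
    ∃ E c, IsCyclicallyReduced c ∧ g = E * evalWord c * E⁻¹ := by
  obtain ⟨E, c, rfl, hc | hc⟩ := exists_conj_eq_evalWord g
  · refine absurd ((isOfFinOrder_conj_iff E _).2 ?_) hg
    match c, hc with
    | [], _ => exact IsOfFinOrder.one
    | [ℓ], _ => simpa using ℓ.isOfFinOrder_toG
  · exact ⟨E, c, hc, rfl⟩

theorem eq_one_or_exists_conj_toG {g : PSL2Z} (hg : IsOfFinOrder g) :
    g = 1 ∨ ∃ (E : PSL2Z) (ℓ : Letter), g = E * ℓ.toG * E⁻¹ := by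
  obtain ⟨E, c, rfl, hc | hc⟩ := exists_conj_eq_evalWord g
  · match c, hc with
    | [], _ => simp
    | [ℓ], _ => exact Or.inr ⟨E, ℓ, by simp⟩
  · exact absurd ((isOfFinOrder_conj_iff E _).1 hg) hc.not_isOfFinOrder

theorem normalWord_iff_isChain_isA {w : List Letter} :
    NormalWord w ↔ (w.map Letter.isA).IsChain (· ≠ ·) := by
  show w.IsChain AltPair ↔ _
  simp only [List.isChain_map, ← altPair_iff]

def wordInv (w : List Letter) : List Letter := (w.map Letter.inv).reverse

@[simp] theorem evalWord_wordInv (w : List Letter) : evalWord (wordInv w) = (evalWord w)⁻¹ := by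
  induction w with
  | nil => simp [wordInv]
  | cons ℓ t ih => simp_all [wordInv]

theorem normalWord_of_map_isA_eq_reverse {u v : List Letter}
    (h : v.map Letter.isA = (u.map Letter.isA).reverse) (hu : NormalWord u) : NormalWord v := by
  rw [normalWord_iff_isChain_isA, h, List.isChain_reverse] at *
  exact hu.imp fun _ _ hab => hab.symm

theorem isCyclicallyReduced_cons_append_cons_wordInv {x y : Letter} {w : List Letter}
    (h : NormalWord (x :: w ++ [y])) : IsCyclicallyReduced (x :: w ++ y :: wordInv w) := by
  have hQ : NormalWord ([y] ++ (wordInv w ++ [x])) :=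
    normalWord_of_map_isA_eq_reverse (by simp [wordInv, Function.comp_def]) h
  have h₁ : NormalWord ((x :: w ++ y :: wordInv w) ++ [x]) := by
    have := h.append_overlap hQ (by simp)
    rwa [show x :: w ++ [y] ++ (wordInv w ++ [x]) = (x :: w ++ y :: wordInv w) ++ [x] by simp]
      at this
  have h₂ : NormalWord ((x :: w ++ y :: wordInv w ++ x :: w) ++ [y]) := by
    have := h₁.append_overlap (show NormalWord ([x] ++ (w ++ [y])) from h) (by simp)
    rwa [show x :: w ++ y :: wordInv w ++ [x] ++ (w ++ [y]) =
      (x :: w ++ y :: wordInv w ++ x :: w) ++ [y] by simp] at this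
  have h₃ : NormalWord ([y] ++ wordInv w) := (normalWord_append.1 (by simpa using hQ)).1
  refine ⟨by simp, ?_⟩
  have := h₂.append_overlap h₃ (by simp)
  rwa [show x :: w ++ y :: wordInv w ++ x :: w ++ [y] ++ wordInv w =
    (x :: w ++ y :: wordInv w) ++ (x :: w ++ y :: wordInv w) by simp] at this

/-- A product of two elliptic elements with different fixed vertices of the Bass–Serre tree has
infinite order. -/
theorem mul_conj_mul_left_of_commute {G : Type*} [Group G] {a ℓ : G} (h : Commute a ℓ)
    (b x : G) : a * (ℓ * x) * b * (ℓ * x)⁻¹ = ℓ * (a * x * b * x⁻¹) * ℓ⁻¹ := by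
  calc _ = a * ℓ * x * b * x⁻¹ * ℓ⁻¹ := by group
    _ = _ := by rw [h.eq]; group

theorem mul_conj_mul_right_of_commute {G : Type*} [Group G] {ℓ b : G} (h : Commute ℓ b)
    (a x : G) : a * (x * ℓ) * b * (x * ℓ)⁻¹ = a * x * b * x⁻¹ := by
  calc _ = a * x * (ℓ * b) * ℓ⁻¹ * x⁻¹ := by group
    _ = _ := by rw [h.eq]; group

theorem not_isOfFinOrder_toG_mul_conj_of_normalWord {α β : Letter} {w : List Letter}
    (h : NormalWord (α :: w ++ [β])) :
    ¬IsOfFinOrder (α.toG * evalWord w * β.toG * (evalWord w)⁻¹) := by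
  simpa [mul_assoc] using (isCyclicallyReduced_cons_append_cons_wordInv h).not_isOfFinOrder

theorem not_isOfFinOrder_toG_mul_conj (α β : Letter) (g : PSL2Z)
    (h : ¬(α.isA = β.isA ∧ g ∈ zpowers α.toG)) :
    ¬IsOfFinOrder (α.toG * g * β.toG * g⁻¹) := by
  induction hn : (normalForm g).length using Nat.strong_induction_on generalizing g with
  | _ n ih =>
  have hw := normalWord_normalForm g
  by_cases hA : ∃ ℓ ∈ (normalForm g).head?, ℓ.isA = α.isA
  · obtain ⟨ℓ, hℓ, hℓα⟩ := hA
    obtain ⟨w, hgw⟩ := List.head?_eq_some_iff.1 hℓ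
    have hℓα' := Letter.toG_mem_zpowers hℓα
    have hg : g = ℓ.toG * evalWord w := by rw [← evalWord_normalForm g, hgw, evalWord_cons]
    have hshort : (normalForm (evalWord w)).length < n := by
      rw [normalForm_evalWord (normalWord_cons.1 (hgw ▸ hw)).2, ← hn, hgw]
      simp
    have hcomm : Commute α.toG ℓ.toG := setLike_mul_comm (s := zpowers _) (mem_zpowers _) hℓα'
    rw [hg, mul_conj_mul_left_of_commute hcomm, isOfFinOrder_conj_iff]
    exact ih _ hshort _ (fun ⟨hαβ, hmem⟩ => h ⟨hαβ, hg ▸ mul_mem hℓα' hmem⟩) rfl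
  by_cases hB : ∃ ℓ ∈ (normalForm g).getLast?, ℓ.isA = β.isA
  · obtain ⟨ℓ, hℓ, hℓβ⟩ := hB
    obtain ⟨w, hgw⟩ := List.getLast?_eq_some_iff.1 hℓ
    have hℓβ' := Letter.toG_mem_zpowers hℓβ
    have hg : g = evalWord w * ℓ.toG := by
      rw [← evalWord_normalForm g, hgw, evalWord_append]
      simp
    have hshort : (normalForm (evalWord w)).length < n := by
      rw [normalForm_evalWord (normalWord_append.1 (hgw ▸ hw)).1, ← hn, hgw]
      simp
    have hcomm : Commute ℓ.toG β.toG := setLike_mul_comm (s := zpowers _) hℓβ' (mem_zpowers _)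
    rw [hg, mul_conj_mul_right_of_commute hcomm]
    refine ih _ hshort _ (fun ⟨hαβ, hmem⟩ => h ⟨hαβ, hg ▸ mul_mem hmem ?_⟩) rfl
    rwa [Letter.zpowers_toG_eq hαβ]
  -- otherwise `α w β w⁻¹` is already cyclically reduced
  push Not at hA hB
  have hαwβ : NormalWord (α :: normalForm g ++ [β]) := by
    cases hnil : normalForm g with
    | nil =>
      have hg : g = 1 := by rw [← evalWord_normalForm g, hnil, evalWord_nil]
      have hαβ : α.isA ≠ β.isA := fun hαβ => h ⟨hαβ, hg ▸ one_mem _⟩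
      exact normalWord_cons.2 ⟨by simpa [altPair_iff] using hαβ, List.isChain_singleton _⟩
    | cons z w =>
      rw [hnil] at hw hA hB
      refine normalWord_cons.2 ⟨fun y hy => ?_, normalWord_append.2 ⟨hw, List.isChain_singleton _,
        fun x hx y hy => ?_⟩⟩
      · obtain rfl : z = y := by simpa using hy
        exact altPair_iff.2 (hA z rfl).symm
      · obtain rfl : y = β := by simpa using hy.symm
        exact altPair_iff.2 (hB x hx)
  simpa using not_isOfFinOrder_toG_mul_conj_of_normalWord hαwβ

/-- In `ℤ/2 * ℤ/3` a torsion subgroup fixes a vertex of the Bass–Serre tree, hence is finite. -/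
theorem finite_of_forall_isOfFinOrder (K : Subgroup PSL2Z) (hK : ∀ g ∈ K, IsOfFinOrder g) :
    (K : Set PSL2Z).Finite := by
  by_cases htriv : ∀ g ∈ K, g = 1
  · exact (Set.finite_singleton 1).subset htriv
  push Not at htriv
  obtain ⟨s, hsK, hs1⟩ := htriv
  obtain ⟨E, α, rfl⟩ := (eq_one_or_exists_conj_toG (hK s hsK)).resolve_left hs1
  refine ((finite_zpowers.2 α.isOfFinOrder_toG).image fun y => E * y * E⁻¹).subset ?_
  intro t htK
  rcases eq_one_or_exists_conj_toG (hK t htK) with rfl | ⟨F, β, rfl⟩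
  · exact ⟨1, one_mem _, by group⟩
  have hfin : IsOfFinOrder (E * (α.toG * (E⁻¹ * F) * β.toG * (E⁻¹ * F)⁻¹) * E⁻¹) := by
    convert hK _ (mul_mem hsK htK) using 1
    group
  rw [isOfFinOrder_conj_iff] at hfin
  obtain ⟨hαβ, hEF⟩ := not_not.1 (mt (not_isOfFinOrder_toG_mul_conj α β (E⁻¹ * F)) (not_not.2 hfin))
  have hβ : β.toG ∈ zpowers α.toG := Letter.toG_mem_zpowers hαβ.symm
  refine ⟨β.toG, hβ, ?_⟩
  calc E * β.toG * E⁻¹ = E * ((E⁻¹ * F) * β.toG * (E⁻¹ * F)⁻¹) * E⁻¹ := by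
        rw [setLike_mul_comm (s := zpowers _) hEF hβ]; group
    _ = F * β.toG * F⁻¹ := by group

section StallingsGraph

variable {H : Subgroup PSL2Z}

theorem readW_mk (u : PSL2Z) (w : List Letter) :
    readW (Quotient.mk (cosetSetoid H) u) w = Quotient.mk _ (u * evalWord w) := by
  induction w generalizing u with
  | nil => rw [evalWord_nil, mul_one]; rfl
  | cons ℓ t ih => exact (ih (u * ℓ.toG)).trans (by rw [evalWord_cons, mul_assoc])

theorem readW_mk_eq_self_iff (y : PSL2Z) (w : List Letter) :
    readW (Quotient.mk (cosetSetoid H) y) w = Quotient.mk _ y ↔ y * evalWord w * y⁻¹ ∈ H := by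
  rw [readW_mk]
  exact Quotient.eq (r := cosetSetoid H)

theorem labelsPathFrom_of_eq_append {W : List Letter} (hW : NormalWord W) (hWH : evalWord W ∈ H) :
    ∀ {P c S : List Letter}, W = P ++ c ++ S → labelsPathFrom H (readW (base H) P) c
  | _, [], _, _ => trivial
  | P, ℓ :: c, S, hPcS => by
    refine ⟨?_, ?_⟩
    · have : edgeOkAux H (readW (base H) P) ℓ := ⟨W, P, c ++ S, hW, hWH, by simp [hPcS], rfl⟩
      cases ℓ <;> exact Or.inl this
    · have := labelsPathFrom_of_eq_append hW hWH (P := P ++ [ℓ]) (c := c) (S := S) (by simp [hPcS])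
      rwa [readW, List.foldl_append] at this

/-- If `z c z⁻¹ ∈ H`, a long power `z c^k z⁻¹` has a normal form containing `c` read from the
vertex `Hz`, so `c` labels a cycle of `Γ(H)` there. -/
theorem IsCyclicallyReduced.labelsCycleAt_mk {c : List Letter} (hc : IsCyclicallyReduced c)
    {z : PSL2Z} (hz : z * evalWord c * z⁻¹ ∈ H) :
    labelsCycleAt H (Quotient.mk _ z) c := by
  have hpow (n : ℕ) : z * evalWord c ^ n * z⁻¹ ∈ H := by
    simpa [conj_pow] using pow_mem hz n
  obtain ⟨m, t, hct, ht⟩ := hc.exists_normalWord_append_evalWord_eq z⁻¹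
  set k := (normalForm z).length + 2
  obtain ⟨d₁, d₂, u₁, u₂, M, hd, hu, hlen, -, hW⟩ :=
    exists_normalForm_evalWord_mul (normalWord_normalForm z) (hc.normalWord_wordPow_append hct k)
  obtain ⟨s, n, hs⟩ := exists_drop_wordPow_append hc.1 t (j := u₁.length) (k := k) (by
    rw [← hlen]
    have := congrArg List.length hd
    simp only [List.length_append] at this
    omega)
  rw [hu, List.drop_left] at hs
  set P := d₁ ++ M ++ s
  set W := normalForm (evalWord (normalForm z) * evalWord (wordPow c k ++ t))
  have hWPS : W = P ++ c ++ (wordPow c n ++ t) := by rw [hW, hs]; simp [P]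
  have hWeval : evalWord W = z * evalWord c ^ (k + m) * z⁻¹ := by
    simp only [W, evalWord_normalForm, evalWord_append, evalWord_wordPow, ht, pow_add]
    group
  have hWH : evalWord W ∈ H := hWeval ▸ hpow _
  have hP : readW (base H) P = Quotient.mk _ z := by
    rw [base, readW_mk, one_mul]
    refine Quotient.sound (show evalWord P * z⁻¹ ∈ H from ?_)
    have : evalWord P * z⁻¹ = evalWord W * (z * evalWord c ^ (1 + n + m) * z⁻¹)⁻¹ := by
      rw [hWPS]
      simp only [evalWord_append, evalWord_wordPow, ht, pow_add]
      group
    rw [this]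
    exact mul_mem hWH (inv_mem (hpow _))
  exact ⟨hP ▸ labelsPathFrom_of_eq_append (normalWord_normalForm _) hWH hWPS,
    (readW_mk_eq_self_iff z c).2 hz⟩

end StallingsGraph

theorem AlmostMalnormal.mul_inv_mem_of_conj_mem {H : Subgroup PSL2Z} (hH : AlmostMalnormal H)
    {g y₁ y₂ : PSL2Z} (hg : ¬IsOfFinOrder g) (h₁ : y₁ * g * y₁⁻¹ ∈ H)
    (h₂ : y₂ * g * y₂⁻¹ ∈ H) : y₁ * y₂⁻¹ ∈ H := by
  by_contra hx
  refine (hH _ hx).not_infinite <| Set.infinite_of_injective_forall_mem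
    (f := fun n : ℕ => (y₂ * g * y₂⁻¹) ^ n)
    (injective_pow_iff_not_isOfFinOrder.2 ((isOfFinOrder_conj_iff _ _).not.2 hg))
    fun n => ⟨pow_mem h₂ n, ?_⟩
  convert pow_mem h₁ n using 1
  simp only [conj_pow]
  group

theorem almost_malnormal_iff_no_double_cycle_general (H : Subgroup PSL2Z) :
    AlmostMalnormal H ↔
      ¬ ∃ (p q : Coset H) (g : PSL2Z) (w : List Letter),
        p ≠ q ∧ NormalWord w ∧ evalWord w = g ∧ ¬ IsOfFinOrder g ∧
        labelsCycleAt H p w ∧ labelsCycleAt H q w := by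
  constructor
  · rintro hH ⟨p, q, g, w, hpq, -, rfl, hg, ⟨-, hp⟩, ⟨-, hq⟩⟩
    obtain ⟨y₁, rfl⟩ := Quotient.exists_rep p
    obtain ⟨y₂, rfl⟩ := Quotient.exists_rep q
    rw [readW_mk_eq_self_iff] at hp hq
    exact hpq (Quotient.sound (hH.mul_inv_mem_of_conj_mem hg hp hq))
  · intro hno x hx
    by_contra hinf
    obtain ⟨g, ⟨hgH, hxgH⟩, hg⟩ :
        ∃ g ∈ H ⊓ H.comap (MulAut.conj x).toMonoidHom, ¬IsOfFinOrder g := by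
      by_contra! htors
      exact hinf (finite_of_forall_isOfFinOrder _ htors)
    obtain ⟨E, c, hc, rfl⟩ := exists_conj_isCyclicallyReduced hg
    refine hno ⟨Quotient.mk _ E, Quotient.mk _ (x * E), _, c, fun hE => hx ?_, hc.normalWord, rfl,
      hc.not_isOfFinOrder, hc.labelsCycleAt_mk hgH, hc.labelsCycleAt_mk ?_⟩
    · simpa using inv_mem (Quotient.exact hE : E * (x * E)⁻¹ ∈ H)
    · simpa [mul_assoc] using hxgH

/-- A finitely generated subgroup `H ≤ PSL₂(ℤ)` is almost malnormal if and only
if there do not exist two distinct vertices `p, q` of its Stallings graph and an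
infinite-order element `g` of `PSL₂(ℤ)` whose normal form labels cycles at both
`p` and `q`. -/
theorem almost_malnormal_iff_no_double_cycle (H : Subgroup PSL2Z) (hH : H.FG) :
    AlmostMalnormal H ↔
      ¬ ∃ (p q : Coset H) (g : PSL2Z) (w : List Letter),
        p ≠ q ∧ NormalWord w ∧ evalWord w = g ∧ ¬ IsOfFinOrder g ∧
        labelsCycleAt H p w ∧ labelsCycleAt H q w :=
  almost_malnormal_iff_no_double_cycle_general H
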